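/- arXiv:1009.2447 — 2 statements merged into one kernel-verified Lean document; each statement's English description precedes it below -/
import Mathlib

section
/- With the same setup, define the Cauchy transform Q̃_j(v) = ∬ q_j(η) w(ξ,η)/(v-ξ) dξ dη for v ∈ ℂ \ ℝ, and the kernel K̃_{1,1}(x,v) = (Σ_{i=0}^{n-1} h_i^{-2} p_i(x) Q̃_i(v)) - 1/(v-x). Then for every v ∈ ℂ \ ℝ and every polynomial q of degree at most n-1, ∬ K̃_{1,1}(ξ,v) q(η) w(ξ,η) dξ dη = 0. -/
/-!
The left-hand side is linear in `Q`, and `q 0, …, q (n - 1)` span the polynomials of degree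
`< n`, so it suffices to take `Q = q j` with `j < n`. Split the kernel into its polynomial part
and the Cauchy factor `1 / (v - ξ)`, which is bounded by `|Im v|⁻¹`; then every integral
converges absolutely on `ℝ × ℝ`. By biorthogonality the polynomial part integrates against `q j`
to `h_j⁻² · h_j² · Q̃_j(v) = Q̃_j(v)`, which cancels the Cauchy part.
-/

open MeasureTheory Polynomial

theorem Polynomial.Sequence.map_eq_zero_of_degree_lt {R M : Type*} [Ring R] [AddCommGroup M]
    [Module R M] (S : Sequence R) {n : ℕ} (hS : ∀ i < n, IsUnit (S i).leadingCoeff)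
    (L : R[X] →ₗ[R] M) (hL : ∀ i < n, L (S i) = 0) {Q : R[X]} (hQ : Q.degree < n) :
    L Q = 0 := by
  have hspan : Submodule.span R (S '' Set.Iio n) ≤ LinearMap.ker L :=
    Submodule.span_le.2 <| Set.image_subset_iff.2 hL
  exact hspan <| by rwa [S.span_degreeLT hS, mem_degreeLT]

theorem Complex.norm_inv_sub_ofReal_le {v : ℂ} (hv : v.im ≠ 0) (x : ℝ) :
    ‖(v - x)⁻¹‖ ≤ |v.im|⁻¹ := by
  rw [norm_inv]
  refine inv_anti₀ (abs_pos.2 hv) ?_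
  simpa using Complex.abs_im_le_norm (v - x)

theorem MeasureTheory.Integrable.ofReal_div_sub_ofReal {α : Type*} [MeasurableSpace α]
    {μ : Measure α} {f φ : α → ℝ} (hf : Integrable f μ) (hφ : Measurable φ) {v : ℂ}
    (hv : v.im ≠ 0) : Integrable (fun a => (f a : ℂ) / (v - φ a)) μ := by
  have hmeas : Measurable fun a => (v - φ a)⁻¹ :=
    (measurable_const.sub (Complex.measurable_ofReal.comp hφ)).inv
  simpa [div_eq_inv_mul] using hf.ofReal.bdd_mul (𝕜 := ℂ) hmeas.aestronglyMeasurable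
    (ae_of_all _ fun a => Complex.norm_inv_sub_ofReal_le hv (φ a))

section CauchyKernel

variable {ω : ℝ → ℝ → ℝ}

theorem integrable_cauchy_integrand
    (hint : ∀ P Q : ℝ[X], Integrable (fun z : ℝ × ℝ => P.eval z.1 * Q.eval z.2 * ω z.1 z.2))
    {v : ℂ} (hv : v.im ≠ 0) (R : ℝ[X]) :
    Integrable (fun z : ℝ × ℝ => ((R.eval z.2 : ℝ) : ℂ) * ω z.1 z.2 / (v - z.1)) := by
  simpa using (hint 1 R).ofReal_div_sub_ofReal measurable_fst hv

theorem cauchyKernel_mul_eq (a : ℕ → ℂ) (p : ℕ → ℝ[X]) (s : Finset ℕ) (v : ℂ) (R : ℝ[X])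
    (x y : ℝ) :
    ((∑ i ∈ s, a i * (((p i).eval x : ℝ) : ℂ)) - 1 / (v - x)) * ((R.eval y : ℝ) : ℂ) * ω x y
      = ∑ i ∈ s, a i * (((p i).eval x * R.eval y * ω x y : ℝ) : ℂ)
        - ((R.eval y : ℝ) : ℂ) * ω x y / (v - x) := by
  simp only [sub_mul, Finset.sum_mul]
  push_cast
  congr 1
  · exact Finset.sum_congr rfl fun i _ => by ring
  · ring

theorem integrable_cauchyKernel_mul
    (hint : ∀ P Q : ℝ[X], Integrable (fun z : ℝ × ℝ => P.eval z.1 * Q.eval z.2 * ω z.1 z.2))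
    {v : ℂ} (hv : v.im ≠ 0) (a : ℕ → ℂ) (p : ℕ → ℝ[X]) (s : Finset ℕ) (R : ℝ[X]) :
    Integrable (fun z : ℝ × ℝ =>
      ((∑ i ∈ s, a i * (((p i).eval z.1 : ℝ) : ℂ)) - 1 / (v - z.1)) * ((R.eval z.2 : ℝ) : ℂ)
        * ω z.1 z.2) := by
  simp_rw [cauchyKernel_mul_eq]
  exact (integrable_finsetSum _ fun i _ => (hint (p i) R).ofReal.const_mul (a i)).sub
    (integrable_cauchy_integrand hint hv R)

theorem integral_cauchyKernel_mul
    (hint : ∀ P Q : ℝ[X], Integrable (fun z : ℝ × ℝ => P.eval z.1 * Q.eval z.2 * ω z.1 z.2))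
    {v : ℂ} (hv : v.im ≠ 0) (a : ℕ → ℂ) (p : ℕ → ℝ[X]) (s : Finset ℕ) (R : ℝ[X]) :
    ∫ z : ℝ × ℝ, ((∑ i ∈ s, a i * (((p i).eval z.1 : ℝ) : ℂ)) - 1 / (v - z.1))
        * ((R.eval z.2 : ℝ) : ℂ) * ω z.1 z.2
      = ∑ i ∈ s, a i * ((∫ z : ℝ × ℝ, (p i).eval z.1 * R.eval z.2 * ω z.1 z.2 : ℝ) : ℂ)
        - ∫ z : ℝ × ℝ, ((R.eval z.2 : ℝ) : ℂ) * ω z.1 z.2 / (v - z.1) := by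
  have hterm : ∀ i ∈ s, Integrable (fun z : ℝ × ℝ =>
      a i * (((p i).eval z.1 * R.eval z.2 * ω z.1 z.2 : ℝ) : ℂ)) :=
    fun i _ => (hint (p i) R).ofReal.const_mul (a i)
  simp_rw [cauchyKernel_mul_eq]
  rw [integral_sub (integrable_finsetSum _ hterm) (integrable_cauchy_integrand hint hv R),
    integral_finsetSum _ hterm]
  simp_rw [integral_const_mul, integral_complex_ofReal]

end CauchyKernel

noncomputable def kernelPairing (ω : ℝ → ℝ → ℝ) (K : ℝ → ℂ)
    (hK : ∀ R : ℝ[X], Integrable (fun z : ℝ × ℝ => K z.1 * ((R.eval z.2 : ℝ) : ℂ) * ω z.1 z.2)) :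
    ℝ[X] →ₗ[ℝ] ℂ where
  toFun R := ∫ z : ℝ × ℝ, K z.1 * ((R.eval z.2 : ℝ) : ℂ) * ω z.1 z.2
  map_add' R S := by
    simp only [eval_add, Complex.ofReal_add, mul_add, add_mul]
    exact integral_add (hK R) (hK S)
  map_smul' c R := by
    simp only [eval_smul, smul_eq_mul, Complex.ofReal_mul, RingHom.id_apply]
    rw [← integral_smul]
    congr 1 with z
    rw [Complex.real_smul]
    ring

theorem stmt_3_general (ω : ℝ → ℝ → ℝ) (p q : ℕ → Polynomial ℝ) (hsq : ℕ → ℝ) (n : ℕ)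
    (hqm : ∀ j, (q j).Monic) (hqd : ∀ j, (q j).natDegree = j)
    (hh : ∀ i, hsq i ≠ 0)
    (hint : ∀ P Q : Polynomial ℝ,
      Integrable (fun z : ℝ × ℝ => P.eval z.1 * Q.eval z.2 * ω z.1 z.2))
    (hbi : ∀ i j, (∫ x : ℝ, ∫ y : ℝ, (p i).eval x * (q j).eval y * ω x y)
      = if i = j then hsq i else 0)
    (Qt : ℕ → ℂ → ℂ)
    (hQt : ∀ j (v : ℂ), v.im ≠ 0 →
      Qt j v = ∫ ξ : ℝ, ∫ η : ℝ, (((q j).eval η : ℝ) : ℂ) * (ω ξ η : ℂ) / (v - (ξ : ℂ)))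
    (Kt : ℝ → ℂ → ℂ)
    (hKt : ∀ (x : ℝ) (v : ℂ), Kt x v =
      (∑ i ∈ Finset.range n, ((hsq i : ℂ))⁻¹ * (((p i).eval x : ℝ) : ℂ) * Qt i v)
        - 1 / (v - (x : ℂ))) :
    ∀ (v : ℂ), v.im ≠ 0 → ∀ (Q : Polynomial ℝ), Q.degree < n →
      (∫ ξ : ℝ, ∫ η : ℝ, Kt ξ v * ((Q.eval η : ℝ) : ℂ) * (ω ξ η : ℂ)) = 0 := by
  intro v hv Q hQ
  let a : ℕ → ℂ := fun i => (hsq i : ℂ)⁻¹ * Qt i v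
  let K : ℝ → ℂ := fun x => (∑ i ∈ Finset.range n, a i * (((p i).eval x : ℝ) : ℂ)) - 1 / (v - x)
  have hKt_eq : ∀ x, Kt x v = K x := fun x => by
    rw [hKt]
    exact congrArg (· - _) (Finset.sum_congr rfl fun i _ => mul_right_comm _ _ _)
  have hK : ∀ R : ℝ[X], Integrable (fun z : ℝ × ℝ => K z.1 * ((R.eval z.2 : ℝ) : ℂ) * ω z.1 z.2) :=
    integrable_cauchyKernel_mul hint hv a p (Finset.range n)
  have hvanish : ∀ j < n, kernelPairing ω K hK (q j) = 0 := by
    intro j hj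
    have hpq : ∀ i, ∫ z : ℝ × ℝ, (p i).eval z.1 * (q j).eval z.2 * ω z.1 z.2
        = if i = j then hsq i else 0 :=
      fun i => (integral_integral (hint (p i) (q j))).symm.trans (hbi i j)
    have hcauchy : ∫ z : ℝ × ℝ, (((q j).eval z.2 : ℝ) : ℂ) * ω z.1 z.2 / (v - z.1) = Qt j v :=
      (integral_integral (integrable_cauchy_integrand hint hv (q j))).symm.trans (hQt j v hv).symm
    change ∫ z : ℝ × ℝ, K z.1 * _ * _ = 0
    rw [integral_cauchyKernel_mul hint hv, hcauchy]
    simp only [hpq, a]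
    rw [Finset.sum_eq_single_of_mem j (Finset.mem_range.2 hj) fun i _ hij => by simp [hij],
      if_pos rfl, mul_right_comm, inv_mul_cancel₀ (by exact_mod_cast hh j), one_mul, sub_self]
  let S : Sequence ℝ := ⟨q, fun j => by rw [degree_eq_natDegree (hqm j).ne_zero, hqd]⟩
  simp_rw [hKt_eq]
  rw [integral_integral (hK Q)]
  exact S.map_eq_zero_of_degree_lt (fun i _ => by simp [S, (hqm i).leadingCoeff]) _ hvanish hQ

/-- Vanishing property of the transformed kernel `K̃₁,₁` (Lemma 4, eq. (42)). -/
theorem stmt_3 (ω : ℝ → ℝ → ℝ) (p q : ℕ → Polynomial ℝ) (hsq : ℕ → ℝ) (n : ℕ)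
    (hpm : ∀ i, (p i).Monic) (hpd : ∀ i, (p i).natDegree = i)
    (hqm : ∀ j, (q j).Monic) (hqd : ∀ j, (q j).natDegree = j)
    (hh : ∀ i, hsq i ≠ 0)
    (hint : ∀ P Q : Polynomial ℝ,
      Integrable (fun z : ℝ × ℝ => P.eval z.1 * Q.eval z.2 * ω z.1 z.2))
    (hbi : ∀ i j, (∫ x : ℝ, ∫ y : ℝ, (p i).eval x * (q j).eval y * ω x y)
      = if i = j then hsq i else 0)
    (Qt : ℕ → ℂ → ℂ)
    (hQt : ∀ j (v : ℂ), v.im ≠ 0 →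
      Qt j v = ∫ ξ : ℝ, ∫ η : ℝ, (((q j).eval η : ℝ) : ℂ) * (ω ξ η : ℂ) / (v - (ξ : ℂ)))
    (Kt : ℝ → ℂ → ℂ)
    (hKt : ∀ (x : ℝ) (v : ℂ), Kt x v =
      (∑ i ∈ Finset.range n, ((hsq i : ℂ))⁻¹ * (((p i).eval x : ℝ) : ℂ) * Qt i v)
        - 1 / (v - (x : ℂ))) :
    ∀ (v : ℂ), v.im ≠ 0 → ∀ (Q : Polynomial ℝ), Q.degree < n →
      (∫ ξ : ℝ, ∫ η : ℝ, Kt ξ v * ((Q.eval η : ℝ) : ℂ) * (ω ξ η : ℂ)) = 0 :=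
  stmt_3_general ω p q hsq n hqm hqd hh hint hbi Qt hQt Kt hKt
end

section
/- Under the determinantal eigenvalue density of the two-matrix model, the average of the product of characteristic polynomials of both matrices evaluated at x and y equals h_n² K̃_{1,2}^{(n+1)}(x,y), i.e. E[∏_{m=1}^n (x−λ_m)(y−μ_m)] = h_n² Σ_{i=0}^{n} h_i^{-2} p_i(x) q_i(y) = Σ_{i=0}^{n} (h_n²/h_i²) p_i(x) q_i(y). -/
/-!
Since `(x - λ)(y - μ) = (λ - x)(μ - y)`, the integrand carries `∏ₖ (lₖ - x) · Δ(l)`, the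
Vandermonde determinant of the nodes `(x, l)`. Written in the monic basis `pᵢ` and expanded along
the row of `x`, it is `∑ᵢ (-1)ⁱ pᵢ(x)` times the minor omitting `pᵢ`; likewise in `y` with `q`.
Applying Andréief's identity in `m` and then in `l` turns each term into `n!²` times a minor of
the bimoment matrix `⟨p_a, q_b⟩`, which is `diag(h_a²)` by biorthogonality. Only the minors with
`i = j` survive, each equal to `∏_{a ≠ i} h_a²`, and `Z = n!² ∏_{a < n} h_a²`.

All integrals exist because the weight decays like a Gaussian in both variables. The one
exception, `V` and `W` quadratic with `τ² ≥ 4 ab`, is excluded by `h₀² > 0`.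
-/

open MeasureTheory Polynomial Matrix Equiv
open scoped Nat

section Andreief

variable {ι α R : Type*} [Fintype ι] [DecidableEq ι] [CommRing R]

lemma det_mul_det_eq_sum_perm (f g : ι → α → R) (x : ι → α) :
    (Matrix.of fun i j => f i (x j)).det * (Matrix.of fun i j => g i (x j)).det =
      ∑ σ : Perm ι, ∑ ρ : Perm ι,
        ((Perm.sign σ : ℤ) : R) * (Perm.sign ρ : ℤ) * ∏ j, f (σ j) (x j) * g (ρ j) (x j) := by
  simp only [det_apply', of_apply, Finset.sum_mul_sum, Finset.prod_mul_distrib]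
  congr! 2 with σ _ ρ _
  ring

lemma sum_sign_mul_sign_mul_prod (G : Matrix ι ι R) :
    ∑ σ : Perm ι, ∑ ρ : Perm ι, ((Perm.sign σ : ℤ) : R) * (Perm.sign ρ : ℤ) * ∏ j, G (σ j) (ρ j)
      = (Fintype.card ι)! * G.det := by
  have hrow (σ : Perm ι) :
      ∑ ρ : Perm ι, ((Perm.sign ρ : ℤ) : R) * ∏ j, G (σ j) (ρ j) = Perm.sign σ * G.det := by
    rw [← det_permute, ← det_transpose, det_apply']
    rfl
  simp_rw [mul_assoc, ← Finset.mul_sum, hrow, ← mul_assoc, ← Int.cast_mul, ← Units.val_mul,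
    Int.units_mul_self, Units.val_one, Int.cast_one, one_mul, Finset.sum_const, Finset.card_univ,
    Fintype.card_perm, nsmul_eq_mul]

variable [MeasurableSpace α] {μ : Measure α} [SigmaFinite μ]

theorem integrable_det_mul_det (f g : ι → α → ℝ)
    (hfg : ∀ a b, Integrable (fun x => f a x * g b x) μ) :
    Integrable (fun x : ι → α =>
      (Matrix.of fun i j => f i (x j)).det * (Matrix.of fun i j => g i (x j)).det)
      (Measure.pi fun _ => μ) := by
  simp_rw [det_mul_det_eq_sum_perm]
  exact integrable_finsetSum _ fun σ _ => integrable_finsetSum _ fun ρ _ =>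
    (Integrable.fintype_prod fun j => hfg (σ j) (ρ j)).const_mul _

/-- Andréief's identity. -/
theorem integral_det_mul_det (f g : ι → α → ℝ)
    (hfg : ∀ a b, Integrable (fun x => f a x * g b x) μ) :
    ∫ x : ι → α, (Matrix.of fun i j => f i (x j)).det * (Matrix.of fun i j => g i (x j)).det
        ∂(Measure.pi fun _ => μ)
      = (Fintype.card ι)! * (Matrix.of fun a b => ∫ x, f a x * g b x ∂μ).det := by
  have hint (σ ρ : Perm ι) := Integrable.fintype_prod (μ := fun _ => μ) fun j => hfg (σ j) (ρ j)
  simp_rw [det_mul_det_eq_sum_perm]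
  rw [integral_finsetSum _ fun σ _ => integrable_finsetSum _ fun ρ _ => (hint σ ρ).const_mul _,
    ← sum_sign_mul_sign_mul_prod]
  refine Finset.sum_congr rfl fun σ _ => ?_
  rw [integral_finsetSum _ fun ρ _ => (hint σ ρ).const_mul _]
  refine Finset.sum_congr rfl fun ρ _ => ?_
  rw [integral_const_mul, integral_fintype_prod_eq_prod (fun j x => f (σ j) x * g (ρ j) x)]
  rfl

end Andreief

namespace Matrix

variable {R : Type*} [CommRing R] {n : ℕ}

lemma det_vandermonde_cons (x : R) (v : Fin n → R) :
    (vandermonde (Fin.cons x v)).det = (∏ k, (v k - x)) * (vandermonde v).det := by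
  rw [det_vandermonde, det_vandermonde, Fin.prod_univ_succ, Fin.prod_Ioi_zero]
  simp [Fin.prod_Ioi_succ]

lemma det_vandermonde_eq_det_eval (p : Fin n → R[X]) (hm : ∀ i, (p i).Monic)
    (hd : ∀ i, (p i).natDegree = i) (v : Fin n → R) :
    (vandermonde v).det = (Matrix.of fun i j => (p i).eval (v j)).det := by
  rw [det_eval_matrixOfPolynomials_eq_det_vandermonde v p hd hm, ← det_transpose]
  rfl

lemma prod_sub_mul_det_vandermonde (p : ℕ → R[X]) (hm : ∀ i, (p i).Monic)
    (hd : ∀ i, (p i).natDegree = i) (x : R) (v : Fin n → R) :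
    (∏ k, (v k - x)) * (vandermonde v).det = ∑ i : Fin (n + 1), (-1) ^ (i : ℕ) * (p i).eval x *
      (Matrix.of fun a b => (p (i.succAbove a)).eval (v b)).det := by
  rw [← det_vandermonde_cons, det_vandermonde_eq_det_eval (fun i => p i) (fun i => hm i)
    (fun i => hd i), ← det_transpose, det_succ_row_zero]
  refine Finset.sum_congr rfl fun i _ => ?_
  rw [← det_transpose]
  simp [Matrix.submatrix, Matrix.transpose]

lemma det_submatrix_succAbove_diagonal (d : Fin (n + 1) → R) (i j : Fin (n + 1)) :
    ((diagonal d).submatrix i.succAbove j.succAbove).det =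
      if i = j then ∏ a, d (i.succAbove a) else 0 := by
  split_ifs with hij
  · rw [hij, submatrix_diagonal _ _ Fin.succAbove_right_injective, det_diagonal]
    rfl
  · obtain ⟨a, ha⟩ := Fin.exists_succAbove_eq (Ne.symm hij)
    refine det_eq_zero_of_row_eq_zero a fun b => ?_
    rw [submatrix_apply, ha, diagonal_apply_ne _ (Fin.succAbove_ne j b).symm]

lemma sum_sum_neg_one_pow_mul_det_submatrix_diagonal (a b d : Fin (n + 1) → R) :
    ∑ i : Fin (n + 1), ∑ j : Fin (n + 1), (-1) ^ (i : ℕ) * a i * ((-1) ^ (j : ℕ) * b j) *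
        ((diagonal d).submatrix i.succAbove j.succAbove).det
      = ∑ i, a i * b i * ∏ k, d (i.succAbove k) := by
  simp_rw [det_submatrix_succAbove_diagonal, mul_ite, mul_zero, Finset.sum_ite_eq,
    Finset.mem_univ, if_true]
  refine Finset.sum_congr rfl fun i _ => ?_
  have hsign : ((-1 : R) ^ (i : ℕ)) * (-1) ^ (i : ℕ) = 1 := by
    rw [← pow_add, ← two_mul, pow_mul, neg_one_sq, one_pow]
  linear_combination (a i * b i * ∏ k, d (i.succAbove k)) * hsign

end Matrix

lemma integral_integral_finsetSum {κ β γ : Type*} [MeasurableSpace β] [MeasurableSpace γ]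
    {μ : Measure β} {ν : Measure γ} (s : Finset κ) (F : κ → β → γ → ℝ)
    (hF : ∀ k ∈ s, ∀ l, Integrable (F k l) ν)
    (hF' : ∀ k ∈ s, Integrable (fun l => ∫ m, F k l m ∂ν) μ) :
    ∫ l, ∫ m, ∑ k ∈ s, F k l m ∂ν ∂μ = ∑ k ∈ s, ∫ l, ∫ m, F k l m ∂ν ∂μ := by
  have hinner (l : β) : ∫ m, ∑ k ∈ s, F k l m ∂ν = ∑ k ∈ s, ∫ m, F k l m ∂ν :=
    integral_finsetSum s fun k hk => hF k hk l
  simp_rw [hinner]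
  exact integral_finsetSum s hF'

noncomputable def bimoment (ω : ℝ → ℝ → ℝ) (P Q : ℝ[X]) : ℝ :=
  ∫ s, ∫ t, P.eval s * Q.eval t * ω s t

def HasBimoments (ω : ℝ → ℝ → ℝ) : Prop :=
  (∀ (Q : ℝ[X]) s, Integrable fun t => Q.eval t * ω s t) ∧
    ∀ P Q : ℝ[X], Integrable fun s => P.eval s * ∫ t, Q.eval t * ω s t

section Bimoment

variable {ι : Type*} [Fintype ι] [DecidableEq ι] {ω : ℝ → ℝ → ℝ} (hω : HasBimoments ω)

lemma bimoment_eq_integral_mul_integral (P Q : ℝ[X]) :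
    bimoment ω P Q = ∫ s, P.eval s * ∫ t, Q.eval t * ω s t := by
  simp_rw [bimoment, mul_assoc, integral_const_mul]

include hω

lemma integrable_det_mul_det_weight (Q : ι → ℝ[X]) (l : ι → ℝ) :
    Integrable fun m : ι → ℝ =>
      (Matrix.of fun i j => (Q i).eval (m j)).det * (Matrix.of fun i j => ω (l i) (m j)).det :=
  integrable_det_mul_det (fun a t => (Q a).eval t) (fun b t => ω (l b) t)
    fun a b => hω.1 (Q a) (l b)

lemma integral_det_mul_det_mul_det_weight (P Q : ι → ℝ[X]) (l : ι → ℝ) :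
    ∫ m : ι → ℝ, (Matrix.of fun i j => (P i).eval (l j)).det *
        ((Matrix.of fun i j => (Q i).eval (m j)).det * (Matrix.of fun i j => ω (l i) (m j)).det)
      = (Fintype.card ι)! * ((Matrix.of fun i j => (P i).eval (l j)).det *
          (Matrix.of fun i j => ∫ t, (Q i).eval t * ω (l j) t).det) := by
  rw [integral_const_mul, volume_pi, integral_det_mul_det (fun a t => (Q a).eval t)
    (fun b t => ω (l b) t) fun a b => hω.1 (Q a) (l b)]
  ring

lemma integrable_integral_det_mul_det_mul_det_weight (P Q : ι → ℝ[X]) :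
    Integrable fun l : ι → ℝ => ∫ m : ι → ℝ, (Matrix.of fun i j => (P i).eval (l j)).det *
      ((Matrix.of fun i j => (Q i).eval (m j)).det * (Matrix.of fun i j => ω (l i) (m j)).det) := by
  simp_rw [integral_det_mul_det_mul_det_weight hω]
  exact (integrable_det_mul_det (fun a s => (P a).eval s) (fun b s => ∫ t, (Q b).eval t * ω s t)
    fun a b => hω.2 (P a) (Q b)).const_mul _

theorem integral_integral_det_mul_det_mul_det_weight (P Q : ι → ℝ[X]) :
    ∫ l : ι → ℝ, ∫ m : ι → ℝ, (Matrix.of fun i j => (P i).eval (l j)).det *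
        ((Matrix.of fun i j => (Q i).eval (m j)).det * (Matrix.of fun i j => ω (l i) (m j)).det)
      = (Fintype.card ι)! ^ 2 * (Matrix.of fun a b => bimoment ω (P a) (Q b)).det := by
  simp_rw [integral_det_mul_det_mul_det_weight hω, bimoment_eq_integral_mul_integral]
  rw [integral_const_mul, volume_pi, integral_det_mul_det (fun a s => (P a).eval s)
    (fun b s => ∫ t, (Q b).eval t * ω s t) fun a b => hω.2 (P a) (Q b)]
  ring

end Bimoment

section CharacteristicPolynomials

variable {ω : ℝ → ℝ → ℝ} {n : ℕ} (hω : HasBimoments ω)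
  {p q : ℕ → ℝ[X]} (hpm : ∀ i, (p i).Monic) (hpd : ∀ i, (p i).natDegree = i)
  (hqm : ∀ i, (q i).Monic) (hqd : ∀ i, (q i).natDegree = i)

include hpm hpd hqm hqd in
lemma prod_mul_det_vandermonde_mul_det_weight (x y : ℝ) (l m : Fin n → ℝ) :
    (∏ k, (x - l k) * (y - m k)) *
        ((vandermonde l).det * (vandermonde m).det * (Matrix.of fun i j => ω (l i) (m j)).det)
      = ∑ ij : Fin (n + 1) × Fin (n + 1),
          (-1) ^ (ij.1 : ℕ) * (p ij.1).eval x * ((-1) ^ (ij.2 : ℕ) * (q ij.2).eval y) *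
          ((Matrix.of fun a b => (p (ij.1.succAbove a)).eval (l b)).det *
            ((Matrix.of fun a b => (q (ij.2.succAbove a)).eval (m b)).det *
              (Matrix.of fun i j => ω (l i) (m j)).det)) := by
  have hsign : ∏ k, (x - l k) * (y - m k) = (∏ k, (l k - x)) * ∏ k, (m k - y) := by
    rw [← Finset.prod_mul_distrib]
    exact Finset.prod_congr rfl fun k _ => by ring
  calc _ = ((∏ k, (l k - x)) * (vandermonde l).det) *
        (((∏ k, (m k - y)) * (vandermonde m).det) * (Matrix.of fun i j => ω (l i) (m j)).det) := by
          rw [hsign]; ring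
    _ = _ := by
      rw [prod_sub_mul_det_vandermonde p hpm hpd, prod_sub_mul_det_vandermonde q hqm hqd,
        Fintype.sum_prod_type, Finset.sum_mul]
      refine Finset.sum_congr rfl fun i _ => ?_
      rw [Finset.sum_mul, Finset.mul_sum]
      exact Finset.sum_congr rfl fun j _ => by ring

include hω hpm hpd hqm hqd in
theorem integral_integral_prod_mul_det_vandermonde_mul_det_weight (x y : ℝ) :
    ∫ l : Fin n → ℝ, ∫ m : Fin n → ℝ, (∏ k, (x - l k) * (y - m k)) *
        ((vandermonde l).det * (vandermonde m).det * (Matrix.of fun i j => ω (l i) (m j)).det)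
      = n ! ^ 2 * ∑ i : Fin (n + 1), ∑ j : Fin (n + 1),
          (-1) ^ (i : ℕ) * (p i).eval x * ((-1) ^ (j : ℕ) * (q j).eval y) *
          ((Matrix.of fun a b : Fin (n + 1) => bimoment ω (p a) (q b)).submatrix
            i.succAbove j.succAbove).det := by
  have hconst (c : ℝ) (F : (Fin n → ℝ) → (Fin n → ℝ) → ℝ) :
      ∫ l, ∫ m, c * F l m = c * ∫ l, ∫ m, F l m := by
    simp_rw [integral_const_mul]
  simp_rw [prod_mul_det_vandermonde_mul_det_weight hpm hpd hqm hqd x y]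
  rw [integral_integral_finsetSum]
  · rw [Fintype.sum_prod_type, Finset.mul_sum]
    refine Finset.sum_congr rfl fun i _ => ?_
    rw [Finset.mul_sum]
    refine Finset.sum_congr rfl fun j _ => ?_
    rw [hconst, integral_integral_det_mul_det_mul_det_weight hω, Fintype.card_fin]
    simp only [submatrix, of_apply]
    ring
  · exact fun k _ l => (integrable_det_mul_det_weight hω _ l).const_mul _ |>.const_mul _
  · intro k _
    simpa only [← integral_const_mul] using
      (integrable_integral_det_mul_det_mul_det_weight hω _ _).const_mul _

include hω hpm hpd hqm hqd in
theorem integral_integral_det_vandermonde_mul_det_weight :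
    ∫ l : Fin n → ℝ, ∫ m : Fin n → ℝ,
        (vandermonde l).det * (vandermonde m).det * (Matrix.of fun i j => ω (l i) (m j)).det
      = n ! ^ 2 * (Matrix.of fun a b : Fin n => bimoment ω (p a) (q b)).det := by
  have hpt (l m : Fin n → ℝ) : (vandermonde l).det * (vandermonde m).det *
      (Matrix.of fun i j => ω (l i) (m j)).det
      = (Matrix.of fun i j : Fin n => (p i).eval (l j)).det *
        ((Matrix.of fun i j : Fin n => (q i).eval (m j)).det *
          (Matrix.of fun i j => ω (l i) (m j)).det) := by
    rw [det_vandermonde_eq_det_eval (fun i => p i) (fun i => hpm i) (fun i => hpd i),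
      det_vandermonde_eq_det_eval (fun i => q i) (fun i => hqm i) (fun i => hqd i), mul_assoc]
  simp_rw [hpt]
  rw [integral_integral_det_mul_det_mul_det_weight hω, Fintype.card_fin]

end CharacteristicPolynomials

section WeightBound

open Filter Topology Real

lemma Polynomial.tendsto_cocompact_atTop_of_even {P : ℝ[X]} (hdeg : 0 < P.natDegree)
    (hEv : Even P.natDegree) (hlc : 0 < P.leadingCoeff) :
    Tendsto P.eval (cocompact ℝ) atTop := by
  have hdeg' : 0 < P.degree := natDegree_pos_iff_degree_pos.1 hdeg
  rw [cocompact_eq_atBot_atTop]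
  refine tendsto_sup.2 ⟨?_, P.tendsto_atTop_of_leadingCoeff_nonneg hdeg' hlc.le⟩
  have h := (P.comp (-X)).tendsto_atTop_of_leadingCoeff_nonneg (by rwa [degree_comp_neg_X])
    (by rw [comp_neg_X_leadingCoeff_eq, hEv.neg_one_pow, one_mul]; exact hlc.le)
  simpa [Function.comp_def] using h.comp tendsto_neg_atBot_atTop

lemma Polynomial.exists_sq_mul_sub_le_eval {R : ℝ[X]} (hdeg : 0 < R.natDegree)
    (hEv : Even R.natDegree) (hlc : 0 < R.leadingCoeff) {K : ℝ}
    (hK : 4 ≤ R.natDegree ∨ K < R.leadingCoeff) :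
    ∃ C, ∀ s, K * s ^ 2 - C ≤ R.eval s := by
  set S := R - C K * X ^ 2 with hS_def
  have hS : 0 < S.natDegree ∧ Even S.natDegree ∧ 0 < S.leadingCoeff := by
    have hX : (C K * X ^ 2 : ℝ[X]).natDegree ≤ 2 := natDegree_C_mul_X_pow_le K 2
    obtain h4 | h2 : 4 ≤ R.natDegree ∨ R.natDegree = 2 := by obtain ⟨k, hk⟩ := hEv; omega
    · have hlt : (C K * X ^ 2 : ℝ[X]).natDegree < R.natDegree := by omega
      rw [natDegree_sub_eq_left_of_natDegree_lt hlt,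
        leadingCoeff_sub_of_degree_lt (degree_lt_degree hlt)]
      exact ⟨hdeg, hEv, hlc⟩
    · have hK' : K < R.leadingCoeff := hK.resolve_left (by omega)
      have hcoeff : S.coeff 2 = R.leadingCoeff - K := by
        simp [hS_def, leadingCoeff, h2]
      have hS2 : S.natDegree = 2 := le_antisymm
        ((natDegree_sub_le_of_le h2.le hX).trans_eq (max_self 2))
        (le_natDegree_of_ne_zero (by rw [hcoeff]; linarith))
      exact ⟨by omega, by rw [hS2]; exact even_two, by rw [leadingCoeff, hS2, hcoeff]; linarith⟩
  obtain ⟨s₀, hs₀⟩ := S.continuous.exists_forall_le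
    (tendsto_cocompact_atTop_of_even hS.1 hS.2.1 hS.2.2)
  refine ⟨-S.eval s₀, fun s => ?_⟩
  have h := hs₀ s
  simp only [hS_def, eval_sub, eval_mul, eval_C, eval_pow, eval_X] at h ⊢
  linarith

lemma Polynomial.eval_eq_of_natDegree_le_two {R : ℝ[X]} (hR : R.natDegree ≤ 2) (x : ℝ) :
    R.eval x = R.coeff 0 + R.coeff 1 * x + R.coeff 2 * x ^ 2 := by
  simp [eval_eq_sum_range' (Nat.lt_succ_of_le hR), Finset.sum_range_succ]

lemma quadratic_form_nonneg {a b τ : ℝ} (ha : 0 < a) (h : τ ^ 2 ≤ 4 * a * b) (s t : ℝ) :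
    0 ≤ a * s ^ 2 + b * t ^ 2 - τ * s * t := by
  nlinarith [sq_nonneg (2 * a * s - τ * t), mul_nonneg (sub_nonneg.2 h) (sq_nonneg t)]

lemma exists_neg_sub_add_mul_le_of_sq_lt {f g : ℝ → ℝ} {a b τ : ℝ} (ha : 0 < a)
    (hτ : τ ^ 2 < 4 * a * b) (hf : ∀ K < a, ∃ C, ∀ s, K * s ^ 2 - C ≤ f s)
    (hg : ∀ K < b, ∃ C, ∀ t, K * t ^ 2 - C ≤ g t) :
    ∃ δ > 0, ∃ C, ∀ s t, -f s - g t + τ * s * t ≤ C - δ * (s ^ 2 + t ^ 2) := by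
  have hsmall : ∀ᶠ ε in 𝓝 (0 : ℝ), 2 * ε < a ∧ τ ^ 2 < 4 * (a - 2 * ε) * (b - 2 * ε) := by
    refine (Continuous.tendsto' (by fun_prop) 0 0 (by ring) |>.eventually
      (eventually_lt_nhds ha)).and (Continuous.tendsto' (by fun_prop) 0 (4 * a * b) (by ring)
        |>.eventually (eventually_gt_nhds hτ))
  obtain ⟨ε, ⟨hεa, hετ⟩, hε⟩ :=
    ((hsmall.filter_mono nhdsWithin_le_nhds).and self_mem_nhdsWithin).exists (f := 𝓝[>] 0)
  obtain ⟨Cf, hCf⟩ := hf (a - ε) (by linarith [show (0 : ℝ) < ε from hε])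
  obtain ⟨Cg, hCg⟩ := hg (b - ε) (by linarith [show (0 : ℝ) < ε from hε])
  refine ⟨ε, hε, Cf + Cg, fun s t => ?_⟩
  nlinarith [hCf s, hCg t, quadratic_form_nonneg (by linarith) hετ.le s t]

lemma exists_neg_eval_sub_eval_add_mul_le {V W : ℝ[X]} {τ : ℝ}
    (hVd : 0 < V.natDegree) (hVe : Even V.natDegree) (hVl : 0 < V.leadingCoeff)
    (hWd : 0 < W.natDegree) (hWe : Even W.natDegree) (hWl : 0 < W.leadingCoeff)
    (hτ : ¬(V.natDegree = 2 ∧ W.natDegree = 2 ∧ 4 * V.leadingCoeff * W.leadingCoeff ≤ τ ^ 2)) :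
    ∃ δ > 0, ∃ C, ∀ s t, -V.eval s - W.eval t + τ * s * t ≤ C - δ * (s ^ 2 + t ^ 2) := by
  have hmin {R : ℝ[X]} (hd : 0 < R.natDegree) (he : Even R.natDegree) (hl : 0 < R.leadingCoeff)
      {a : ℝ} (ha : 4 ≤ R.natDegree ∨ a ≤ R.leadingCoeff) :
      ∀ K < a, ∃ C, ∀ s, K * s ^ 2 - C ≤ R.eval s :=
    fun K hK => exists_sq_mul_sub_le_eval hd he hl (ha.imp_right hK.trans_le)
  suffices ∃ a b, 0 < a ∧ τ ^ 2 < 4 * a * b ∧ (4 ≤ V.natDegree ∨ a ≤ V.leadingCoeff) ∧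
      (4 ≤ W.natDegree ∨ b ≤ W.leadingCoeff) by
    obtain ⟨a, b, ha, hab, hVa, hWb⟩ := this
    exact exists_neg_sub_add_mul_le_of_sq_lt ha hab (hmin hVd hVe hVl hVa)
      (hmin hWd hWe hWl hWb)
  have large {c : ℝ} (hc : 0 < c) : τ ^ 2 < 4 * (τ ^ 2 / c + 1) * c := by
    have h : τ ^ 2 / c * c = τ ^ 2 := div_mul_cancel₀ _ hc.ne'
    nlinarith [sq_nonneg τ]
  obtain hV4 | hV2 : 4 ≤ V.natDegree ∨ V.natDegree = 2 := by obtain ⟨k, hk⟩ := hVe; omega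
  · exact ⟨_, _, by positivity, large hWl, .inl hV4, .inr le_rfl⟩
  obtain hW4 | hW2 : 4 ≤ W.natDegree ∨ W.natDegree = 2 := by obtain ⟨k, hk⟩ := hWe; omega
  · exact ⟨V.leadingCoeff, τ ^ 2 / V.leadingCoeff + 1, hVl, (large hVl).trans_eq (by ring),
      .inr le_rfl, .inl hW4⟩
  · exact ⟨_, _, hVl, lt_of_not_ge fun h => hτ ⟨hV2, hW2, h⟩, .inr le_rfl, .inr le_rfl⟩

end WeightBound

section Degenerate

open Real

/-- Here `s ↦ ∫ t, exp (…)` is bounded below by a positive constant at `s` or at `-s`, so it is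
not integrable and the outer integral takes the junk value `0`. -/
lemma integral_integral_exp_eq_zero {V W : ℝ[X]} {τ : ℝ} (hV : V.natDegree ≤ 2)
    (hW : W.natDegree ≤ 2) (hb : 0 < W.coeff 2) (hτ : 4 * V.coeff 2 * W.coeff 2 ≤ τ ^ 2) :
    ∫ s, ∫ t, exp (-V.eval s - W.eval t + τ * s * t) = 0 := by
  set b := W.coeff 2 with hb_def
  set E : ℝ → ℝ := fun s => -V.eval s + (τ * s - W.coeff 1) ^ 2 / (4 * b) - W.coeff 0
  have hinner (s : ℝ) : ∫ t, exp (-V.eval s - W.eval t + τ * s * t) = √(π / b) * exp (E s) := by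
    have hsq (t : ℝ) : -V.eval s - W.eval t + τ * s * t
        = -b * (t - (τ * s - W.coeff 1) / (2 * b)) ^ 2 + E s := by
      rw [eval_eq_of_natDegree_le_two hW, ← hb_def]
      simp only [E]
      field_simp
      ring
    simp_rw [hsq, exp_add, integral_mul_const,
      integral_sub_right_eq_self (fun t => exp (-b * t ^ 2)), integral_gaussian]
  set γ := W.coeff 1 ^ 2 / (4 * b) - W.coeff 0 - V.coeff 0
  have hsymm (s : ℝ) : exp γ ≤ exp (E s) + exp (E (-s)) := by
    have h : 2 * γ ≤ E s + E (-s) := by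
      have hκ : 0 ≤ (τ ^ 2 / (2 * b) - 2 * V.coeff 2) * s ^ 2 := by
        refine mul_nonneg ?_ (sq_nonneg s)
        rw [sub_nonneg, le_div_iff₀ (by positivity)]
        linarith
      have hE : E s + E (-s) = 2 * γ + (τ ^ 2 / (2 * b) - 2 * V.coeff 2) * s ^ 2 := by
        simp only [E, γ, eval_eq_of_natDegree_le_two hV]
        field_simp
        ring
      linarith
    rcases le_total γ (E s) with h' | h'
    · linarith [exp_le_exp.2 h', exp_pos (E (-s))]
    · linarith [exp_le_exp.2 (show γ ≤ E (-s) by linarith), exp_pos (E s)]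
  by_contra hne
  have hint := (Integrable.of_integral_ne_zero hne)
  have hc : 0 < √(π / b) * exp γ := by positivity
  have hfin := (hint.add hint.comp_neg).measure_norm_ge_lt_top hc
  refine hfin.ne (top_unique (le_of_eq_of_le Real.volume_univ.symm (measure_mono fun s _ => ?_)))
  simp only [Set.mem_ofPred_eq, Pi.add_apply, hinner, ← mul_add]
  rw [Real.norm_of_nonneg (by positivity)]
  exact mul_le_mul_of_nonneg_left (hsymm s) (sqrt_nonneg _)

end Degenerate

section Integrability

open Real

lemma Polynomial.integrable_eval_mul_exp_neg_mul_sq (P : ℝ[X]) {δ : ℝ} (hδ : 0 < δ) :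
    Integrable fun t => P.eval t * exp (-δ * t ^ 2) := by
  simp_rw [eval_eq_sum_range, Finset.sum_mul, mul_assoc]
  refine integrable_finsetSum _ fun k _ => Integrable.const_mul ?_ _
  simpa [Real.rpow_natCast] using
    integrable_rpow_mul_exp_neg_mul_sq hδ (s := k) (by linarith [k.cast_nonneg (α := ℝ)])

variable {ω : ℝ → ℝ → ℝ} {δ C : ℝ} (hδ : 0 < δ) (hcont : Continuous (Function.uncurry ω))
  (hbound : ∀ s t, ‖ω s t‖ ≤ exp (C - δ * (s ^ 2 + t ^ 2)))

include hbound in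
lemma norm_eval_mul_le_of_norm_le_exp (Q : ℝ[X]) (s t : ℝ) :
    ‖Q.eval t * ω s t‖ ≤ exp (C - δ * s ^ 2) * ‖Q.eval t * exp (-δ * t ^ 2)‖ := by
  rw [norm_mul, norm_mul, Real.norm_of_nonneg (exp_pos _).le, mul_left_comm]
  refine mul_le_mul_of_nonneg_left ((hbound s t).trans_eq ?_) (norm_nonneg _)
  rw [← exp_add]
  ring_nf

include hδ hcont hbound in
lemma HasBimoments.of_norm_le_exp : HasBimoments ω := by
  refine ⟨fun Q s => ?_, fun P Q => ?_⟩
  · exact ((Q.integrable_eval_mul_exp_neg_mul_sq hδ).norm.const_mul _).mono'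
      (Q.continuous.mul (hcont.comp (Continuous.prodMk_right s))).aestronglyMeasurable
      (ae_of_all _ (norm_eval_mul_le_of_norm_le_exp hbound Q s))
  set M := ∫ t, ‖Q.eval t * exp (-δ * t ^ 2)‖
  have hinner (s : ℝ) : ‖∫ t, Q.eval t * ω s t‖ ≤ exp (C - δ * s ^ 2) * M :=
    (norm_integral_le_of_norm_le ((Q.integrable_eval_mul_exp_neg_mul_sq hδ).norm.const_mul _)
      (ae_of_all _ (norm_eval_mul_le_of_norm_le_exp hbound Q s))).trans_eq (integral_const_mul _ _)
  have hmeas : AEStronglyMeasurable fun s => ∫ t, Q.eval t * ω s t :=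
    (((Q.continuous.comp continuous_snd).mul hcont).stronglyMeasurable.integral_prod_right'
      (f := fun st : ℝ × ℝ => Q.eval st.2 * ω st.1 st.2)).aestronglyMeasurable
  refine (((P.integrable_eval_mul_exp_neg_mul_sq hδ).norm.const_mul (exp C * M)).mono'
    (P.continuous.aestronglyMeasurable.mul hmeas) (ae_of_all _ fun s => ?_))
  rw [norm_mul, norm_mul, Real.norm_of_nonneg (exp_pos _).le]
  calc ‖P.eval s‖ * ‖∫ t, Q.eval t * ω s t‖ ≤ ‖P.eval s‖ * (exp (C - δ * s ^ 2) * M) :=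
        mul_le_mul_of_nonneg_left (hinner s) (norm_nonneg _)
    _ = exp C * M * (‖P.eval s‖ * exp (-δ * s ^ 2)) := by
        rw [sub_eq_add_neg, exp_add, neg_mul]
        ring

theorem HasBimoments.of_exp {V W : ℝ[X]} {τ : ℝ}
    (hVd : 0 < V.natDegree) (hVe : Even V.natDegree) (hVl : 0 < V.leadingCoeff)
    (hWd : 0 < W.natDegree) (hWe : Even W.natDegree) (hWl : 0 < W.leadingCoeff)
    (hω : ∀ s t, ω s t = exp (-V.eval s - W.eval t + τ * s * t))
    (hmass : ∫ s, ∫ t, ω s t ≠ 0) : HasBimoments ω := by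
  obtain ⟨δ, hδ, C, hC⟩ := exists_neg_eval_sub_eval_add_mul_le (τ := τ) hVd hVe hVl hWd hWe hWl
    fun ⟨hV2, hW2, hτ⟩ => hmass <| by
      rw [leadingCoeff, leadingCoeff, hV2, hW2] at hτ
      simp_rw [hω]
      exact integral_integral_exp_eq_zero hV2.le hW2.le (hW2 ▸ hWl) hτ
  refine .of_norm_le_exp (C := C) hδ (by simp_rw [Function.uncurry_def, hω]; fun_prop) fun s t => ?_
  rw [hω, Real.norm_of_nonneg (exp_pos _).le]
  exact exp_le_exp.2 (hC s t)

end Integrability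

lemma Fin.prod_succAbove_div_prod {K : Type*} [Field K] {n : ℕ} {h : ℕ → K}
    (hh : ∀ k, h k ≠ 0) (i : Fin (n + 1)) :
    (∏ a : Fin n, h (i.succAbove a)) / ∏ k : Fin n, h k = h n / h i := by
  have h' := Fin.prod_univ_succAbove (fun k : Fin (n + 1) => h k) i
  rw [Fin.prod_univ_castSucc] at h'
  simp only [Fin.val_castSucc, Fin.val_last] at h'
  rw [div_eq_div_iff (Finset.prod_ne_zero_iff.2 fun (k : Fin n) _ => hh k) (hh i)]
  linear_combination h'.symm

theorem stmt_19_general (V W : Polynomial ℝ) (τ : ℝ)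
    (hVe : Even V.natDegree) (hVd : 0 < V.natDegree) (hVl : 0 < V.leadingCoeff)
    (hWe : Even W.natDegree) (hWd : 0 < W.natDegree) (hWl : 0 < W.leadingCoeff)
    (ω : ℝ → ℝ → ℝ)
    (hω : ∀ x y, ω x y = Real.exp (-V.eval x - W.eval y + τ * x * y))
    (p q : ℕ → Polynomial ℝ) (hsq : ℕ → ℝ)
    (hpm : ∀ i, (p i).Monic) (hpd : ∀ i, (p i).natDegree = i)
    (hqm : ∀ j, (q j).Monic) (hqd : ∀ j, (q j).natDegree = j)
    (hh : ∀ i, 0 < hsq i)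
    (hbi : ∀ i j, (∫ x : ℝ, ∫ y : ℝ, (p i).eval x * (q j).eval y * ω x y)
      = if i = j then hsq i else 0)
    (n : ℕ) (Z : ℝ)
    (hZ : Z = ∫ l : Fin n → ℝ, ∫ m : Fin n → ℝ,
      (Matrix.vandermonde l).det * (Matrix.vandermonde m).det *
        (Matrix.of fun i j : Fin n => ω (l i) (m j)).det) :
    ∀ x y : ℝ,
      (∫ l : Fin n → ℝ, ∫ m : Fin n → ℝ,
        (∏ k : Fin n, ((x - l k) * (y - m k))) *
          ((Matrix.vandermonde l).det * (Matrix.vandermonde m).det *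
            (Matrix.of fun i j : Fin n => ω (l i) (m j)).det)) / Z
      = ∑ i ∈ Finset.range (n + 1), (hsq n / hsq i) * (p i).eval x * (q i).eval y := by
  intro x y
  have hmass : ∫ s, ∫ t, ω s t ≠ 0 := by
    have h := hbi 0 0
    simp only [(hpm 0).natDegree_eq_zero.1 (hpd 0), (hqm 0).natDegree_eq_zero.1 (hqd 0), eval_one,
      one_mul, if_pos] at h
    exact h ▸ (hh 0).ne'
  have hω' := HasBimoments.of_exp hVd hVe hVl hWd hWe hWl hω hmass
  have hdiag (k : ℕ) : (Matrix.of fun a b : Fin k => bimoment ω (p a) (q b))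
      = diagonal fun a : Fin k => hsq a := by
    ext a b
    simp [bimoment, hbi, diagonal_apply, Fin.val_inj]
  have hZ' : Z = n ! ^ 2 * ∏ k : Fin n, hsq k := by
    rw [hZ, integral_integral_det_vandermonde_mul_det_weight hω' hpm hpd hqm hqd, hdiag,
      det_diagonal]
  rw [integral_integral_prod_mul_det_vandermonde_mul_det_weight hω' hpm hpd hqm hqd, hdiag,
    sum_sum_neg_one_pow_mul_det_submatrix_diagonal, hZ', Finset.mul_sum, Finset.sum_div,
    ← Fin.sum_univ_eq_sum_range (fun i => hsq n / hsq i * (p i).eval x * (q i).eval y)]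
  refine Finset.sum_congr rfl fun i _ => ?_
  rw [← Fin.prod_succAbove_div_prod (fun k => (hh k).ne') i]
  field_simp

/-- In the two-matrix model, the average of the product of both characteristic polynomials is
`E[∏ₘ (x−λₘ)(y−μₘ)] = Σ_{i=0}^{n} (hₙ²/hᵢ²) pᵢ(x) qᵢ(y)` (Theorem 3, case `(1,1,0,0)`). -/
theorem stmt_19 (V W : Polynomial ℝ) (τ : ℝ)
    (hVe : Even V.natDegree) (hVd : 0 < V.natDegree) (hVl : 0 < V.leadingCoeff)
    (hWe : Even W.natDegree) (hWd : 0 < W.natDegree) (hWl : 0 < W.leadingCoeff)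
    (ω : ℝ → ℝ → ℝ)
    (hω : ∀ x y, ω x y = Real.exp (-V.eval x - W.eval y + τ * x * y))
    (p q : ℕ → Polynomial ℝ) (hsq : ℕ → ℝ)
    (hpm : ∀ i, (p i).Monic) (hpd : ∀ i, (p i).natDegree = i)
    (hqm : ∀ j, (q j).Monic) (hqd : ∀ j, (q j).natDegree = j)
    (hh : ∀ i, 0 < hsq i)
    (hbi : ∀ i j, (∫ x : ℝ, ∫ y : ℝ, (p i).eval x * (q j).eval y * ω x y)
      = if i = j then hsq i else 0)
    (n : ℕ) (Z : ℝ)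
    (hZ : Z = ∫ l : Fin n → ℝ, ∫ m : Fin n → ℝ,
      (Matrix.vandermonde l).det * (Matrix.vandermonde m).det *
        (Matrix.of fun i j : Fin n => ω (l i) (m j)).det)
    (hZ0 : Z ≠ 0) :
    ∀ x y : ℝ,
      (∫ l : Fin n → ℝ, ∫ m : Fin n → ℝ,
        (∏ k : Fin n, ((x - l k) * (y - m k))) *
          ((Matrix.vandermonde l).det * (Matrix.vandermonde m).det *
            (Matrix.of fun i j : Fin n => ω (l i) (m j)).det)) / Z
      = ∑ i ∈ Finset.range (n + 1), (hsq n / hsq i) * (p i).eval x * (q i).eval y :=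
  stmt_19_general V W τ hVe hVd hVl hWe hWd hWl ω hω p q hsq hpm hpd hqm hqd hh hbi n Z hZ
end
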